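/- arXiv:1201.3379 — 9 statements merged into one kernel-verified Lean document; each statement's English description precedes it below -/
import Mathlib

section
/- In any associative dialgebra, the dicommutator ⟨a,b⟩ = a⊣b - b⊢a satisfies the Leibniz identity: ⟨⟨a,b⟩,c⟩ = ⟨⟨a,c⟩,b⟩ + ⟨a,⟨b,c⟩⟩ for all a, b, c. -/
theorem stmt_4 (R : Type*) [CommRing R] (A : Type*) [AddCommGroup A] [Module R A]
    (l r : A →ₗ[R] A →ₗ[R] A)
    (bar1 : ∀ a b c : A, r (l a b) c = r (r a b) c)
    (bar2 : ∀ a b c : A, l a (l b c) = l a (r b c))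
    (lassoc : ∀ a b c : A, l (l a b) c = l a (l b c))
    (rassoc : ∀ a b c : A, r (r a b) c = r a (r b c))
    (inner : ∀ a b c : A, l (r a b) c = r a (l b c)) (a b c : A) :
    l (l a b - r b a) c - r c (l a b - r b a) = (l (l a c - r c a) b - r b (l a c - r c a)) + (l a (l b c - r c b) - r (l b c - r c b) a) := by
  simp only [map_sub, LinearMap.sub_apply, lassoc, rassoc, inner, bar1, bar2]
  abel
end

section
/- In any associative dialgebra, the antidicommutator a⋆b = a⊣b + b⊢a satisfies right commutativity: a⋆(b⋆c) = a⋆(c⋆b) for all a, b, c. -/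
theorem stmt_5 (R : Type*) [CommRing R] (A : Type*) [AddCommGroup A] [Module R A]
    (l r : A →ₗ[R] A →ₗ[R] A)
    (bar1 : ∀ a b c : A, r (l a b) c = r (r a b) c)
    (bar2 : ∀ a b c : A, l a (l b c) = l a (r b c))
    (lassoc : ∀ a b c : A, l (l a b) c = l a (l b c))
    (rassoc : ∀ a b c : A, r (r a b) c = r a (r b c))
    (inner : ∀ a b c : A, l (r a b) c = r a (l b c)) (a b c : A) :
    l a (l b c + r c b) + r (l b c + r c b) a = l a (l c b + r b c) + r (l c b + r b c) a := by
  simp only [map_add, LinearMap.add_apply, bar1, bar2]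
  abel
end

section
/- In any associative dialgebra, the antidicommutator a⋆b = a⊣b + b⊢a satisfies the right Jordan identity: (b⋆(a⋆a))⋆a = (b⋆a)⋆(a⋆a) for all a, b. -/
theorem stmt_6 (R : Type*) [CommRing R] (A : Type*) [AddCommGroup A] [Module R A]
    (l r : A →ₗ[R] A →ₗ[R] A)
    (bar1 : ∀ a b c : A, r (l a b) c = r (r a b) c)
    (bar2 : ∀ a b c : A, l a (l b c) = l a (r b c))
    (lassoc : ∀ a b c : A, l (l a b) c = l a (l b c))
    (rassoc : ∀ a b c : A, r (r a b) c = r a (r b c))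
    (inner : ∀ a b c : A, l (r a b) c = r a (l b c)) (a b : A) :
    l (l b (l a a + r a a) + r (l a a + r a a) b) a + r a (l b (l a a + r a a) + r (l a a + r a a) b) = l (l b a + r a b) (l a a + r a a) + r (l a a + r a a) (l b a + r a b) := by
  have h : (l b) ((r a) ((l a) a)) = (l b) ((r a) ((r a) a)) := by
    rw [← inner, bar2, rassoc]
  simp only [map_add, LinearMap.add_apply, lassoc, rassoc, inner, bar1, bar2, h]
  abel
end

section
/- In any associative dialgebra, the antidicommutator a⋆b = a⊣b + b⊢a satisfies the right Osborn identity: (a,b,c⋆c) = 2·(a⋆c, b, c), where (x,y,z) = (x⋆y)⋆z - x⋆(y⋆z). -/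
theorem stmt_7 (R : Type*) [CommRing R] (A : Type*) [AddCommGroup A] [Module R A]
    (l r : A →ₗ[R] A →ₗ[R] A)
    (bar1 : ∀ a b c : A, r (l a b) c = r (r a b) c)
    (bar2 : ∀ a b c : A, l a (l b c) = l a (r b c))
    (lassoc : ∀ a b c : A, l (l a b) c = l a (l b c))
    (rassoc : ∀ a b c : A, r (r a b) c = r a (r b c))
    (inner : ∀ a b c : A, l (r a b) c = r a (l b c)) (a b c : A) :
    ((l (l a b + r b a) (l c c + r c c) + r (l c c + r c c) (l a b + r b a)) - (l a (l b (l c c + r c c) + r (l c c + r c c) b) + r (l b (l c c + r c c) + r (l c c + r c c) b) a)) = 2 • ((l (l (l a c + r c a) b + r b (l a c + r c a)) c + r c (l (l a c + r c a) b + r b (l a c + r c a))) - (l (l a c + r c a) (l b c + r c b) + r (l b c + r c b) (l a c + r c a))) := by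
  have h : ∀ x y z w : A, l x (r y (l z w)) = l x (r y (r z w)) := fun x y z w => by
    rw [← inner, bar2, rassoc]
  simp only [map_add, LinearMap.add_apply, two_smul, lassoc, rassoc, inner, bar1, bar2, h]
  abel
end

section
/- In any Leibniz algebra, the iterated bracket ⟨a,b,c⟩ := ⟨⟨a,b⟩,c⟩ satisfies the first defining identity of Leibniz triple systems: ⟨a,⟨b,c,d⟩,e⟩ = ⟨⟨a,b,c⟩,d,e⟩ - ⟨⟨a,c,b⟩,d,e⟩ - ⟨⟨a,d,b⟩,c,e⟩ + ⟨⟨a,d,c⟩,b,e⟩ for all a, b, c, d, e. -/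
theorem stmt_12 (R : Type*) [CommRing R] (A : Type*)
    [AddCommGroup A] [Module R A] (br : A →ₗ[R] A →ₗ[R] A)
    (leib : ∀ a b c : A, br (br a b) c = br (br a c) b + br a (br b c))
    (a b c d e : A) :
    br (br a (br (br b c) d)) e = (br (br (br (br a b) c) d) e) - (br (br (br (br a c) b) d) e) - (br (br (br (br a d) b) c) e) + (br (br (br (br a d) c) b) e) := by
  have h1 : ∀ x y z : A, br x (br y z) = br (br x y) z - br (br x z) y := by
    intro x y z
    rw [leib x y z]; abel
  have key : br a (br (br b c) d) =
      br (br (br a b) c) d - br (br (br a c) b) d - br (br (br a d) b) c + br (br (br a d) c) b := by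
    rw [h1 a (br b c) d, h1 a b c, h1 (br a d) b c, map_sub, LinearMap.sub_apply]
    abel
  rw [key]
  simp only [map_sub, map_add, LinearMap.sub_apply, LinearMap.add_apply]
end

section
/- In any Leibniz algebra, the iterated bracket ⟨a,b,c⟩ := ⟨⟨a,b⟩,c⟩ satisfies the second defining identity of Leibniz triple systems: ⟨a,b,⟨c,d,e⟩⟩ = ⟨⟨a,b,c⟩,d,e⟩ - ⟨⟨a,b,d⟩,c,e⟩ - ⟨⟨a,b,e⟩,c,d⟩ + ⟨⟨a,b,e⟩,d,c⟩ for all a, b, c, d, e. -/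
theorem stmt_13 (R : Type*) [CommRing R] (A : Type*)
    [AddCommGroup A] [Module R A] (br : A →ₗ[R] A →ₗ[R] A)
    (leib : ∀ a b c : A, br (br a b) c = br (br a c) b + br a (br b c))
    (a b c d e : A) :
    br (br a b) (br (br c d) e) = (br (br (br (br a b) c) d) e) - (br (br (br (br a b) d) c) e) - (br (br (br (br a b) e) c) d) + (br (br (br (br a b) e) d) c) := by
  have key : ∀ x y z : A, br x (br y z) = br (br x y) z - br (br x z) y := by
    intro x y z
    rw [leib x y z]; abel
  rw [key (br a b) (br c d) e, key (br a b) c d, key (br (br a b) e) c d]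
  simp only [map_sub, LinearMap.sub_apply]
  abel
end

section
/- In any associative dialgebra, the operation ⟨a,b,c⟩ = (a⊣b)⊣c - (b⊢a)⊣c - c⊢(a⊣b) + c⊢(b⊢a) (the BSO image of the Lie triple product) satisfies ⟨a,⟨b,c,d⟩,e⟩ = ⟨⟨a,b,c⟩,d,e⟩ - ⟨⟨a,c,b⟩,d,e⟩ - ⟨⟨a,d,b⟩,c,e⟩ + ⟨⟨a,d,c⟩,b,e⟩ for all a, b, c, d, e. -/
set_option maxHeartbeats 4000000 in
theorem stmt_14 (R : Type*) [CommRing R] (A : Type*) [AddCommGroup A] [Module R A]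
    (l r : A →ₗ[R] A →ₗ[R] A)
    (bar1 : ∀ a b c : A, r (l a b) c = r (r a b) c)
    (bar2 : ∀ a b c : A, l a (l b c) = l a (r b c))
    (lassoc : ∀ a b c : A, l (l a b) c = l a (l b c))
    (rassoc : ∀ a b c : A, r (r a b) c = r a (r b c))
    (inner : ∀ a b c : A, l (r a b) c = r a (l b c)) (a b c d e : A) :
    (l (l a (l (l b c) d - l (r c b) d - r d (l b c) + r d (r c b))) e - l (r (l (l b c) d - l (r c b) d - r d (l b c) + r d (r c b)) a) e - r e (l a (l (l b c) d - l (r c b) d - r d (l b c) + r d (r c b))) + r e (r (l (l b c) d - l (r c b) d - r d (l b c) + r d (r c b)) a)) = (l (l (l (l a b) c - l (r b a) c - r c (l a b) + r c (r b a)) d) e - l (r d (l (l a b) c - l (r b a) c - r c (l a b) + r c (r b a))) e - r e (l (l (l a b) c - l (r b a) c - r c (l a b) + r c (r b a)) d) + r e (r d (l (l a b) c - l (r b a) c - r c (l a b) + r c (r b a)))) - (l (l (l (l a c) b - l (r c a) b - r b (l a c) + r b (r c a)) d) e - l (r d (l (l a c) b - l (r c a) b - r b (l a c) + r b (r c a)))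 e - r e (l (l (l a c) b - l (r c a) b - r b (l a c) + r b (r c a)) d) + r e (r d (l (l a c) b - l (r c a) b - r b (l a c) + r b (r c a)))) - (l (l (l (l a d) b - l (r d a) b - r b (l a d) + r b (r d a)) c) e - l (r c (l (l a d) b - l (r d a) b - r b (l a d) + r b (r d a))) e - r e (l (l (l a d) b - l (r d a) b - r b (l a d) + r b (r d a)) c) + r e (r c (l (l a d) b - l (r d a) b - r b (l a d) + r b (r d a)))) + (l (l (l (l a d) c - l (r d a) c - r c (l a d) + r c (r d a)) b) e - l (r b (l (l a d) c - l (r d a) c - r c (l a d) + r c (r d a))) e - r e (l (l (l a d) c - l (r d a) c - r c (l a d) + r c (r d a)) b) + r e (r b (l (l a d) c - l (r d a) c - r c (l a d) + r c (r d a)))) := by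
  simp only [map_sub, map_add, LinearMap.sub_apply, LinearMap.add_apply]
  simp only [lassoc, rassoc, inner, bar1, bar2]
  have hK : ∀ a b x : A, l a (r b x) = l (l a b) x := fun a b x => by
    rw [lassoc, bar2]
  simp only [hK, ← lassoc]
  abel
end

section
/- In any alternative dialgebra (a 0-dialgebra satisfying (a,b,c)_⊣ + (c,b,a)_⊢ = 0, (a,b,c)_⊣ - (b,c,a)_⊢ = 0, (a,b,c)_× + (a,c,b)_⊢ = 0), the left associator is alternating in its last two arguments: (a,b,c)_⊣ + (a,c,b)_⊣ = 0. -/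
theorem stmt_17 (R : Type*) [CommRing R] (A : Type*) [AddCommGroup A] [Module R A]
    (l r : A →ₗ[R] A →ₗ[R] A)
    (bar1 : ∀ a b c : A, r (l a b) c = r (r a b) c)
    (bar2 : ∀ a b c : A, l a (l b c) = l a (r b c))
    (alt1 : ∀ a b c : A, (l (l a b) c - l a (l b c)) + (r (r c b) a - r c (r b a)) = 0)
    (alt2 : ∀ a b c : A, (l (l a b) c - l a (l b c)) - (r (r b c) a - r b (r c a)) = 0)
    (alt3 : ∀ a b c : A, (l (r a b) c - r a (l b c)) + (r (r a c) b - r a (r c b)) = 0)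
    (a b c : A) :
    (l (l a b) c - l a (l b c)) + (l (l a c) b - l a (l c b)) = 0 := by
  have h1 := alt1 a b c
  have h2 := alt2 a c b
  linear_combination (norm := abel) h1 + h2
end

section
/- In any alternative algebra, the commutator [a,b] = ab - ba satisfies the Malcev identity: [[a,b],[a,c]] = [[[a,b],c],a] + [[[b,c],a],a] + [[[c,a],a],b] for all a, b, c. -/
theorem stmt_18 (R : Type*) [CommRing R] (A : Type*) [NonUnitalNonAssocRing A]
    [Module R A] [SMulCommClass R A A] [IsScalarTower R A A]
    (altL : ∀ a b c : A, ((a*b)*c - a*(b*c)) + ((b*a)*c - b*(a*c)) = 0)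
    (altR : ∀ a b c : A, ((a*b)*c - a*(b*c)) + ((a*c)*b - a*(c*b)) = 0)
    (a b c : A) :
    ((a*b - b*a)*(a*c - c*a) - (a*c - c*a)*(a*b - b*a)) = (((a*b - b*a)*c - c*(a*b - b*a))*a - a*((a*b - b*a)*c - c*(a*b - b*a))) + (((b*c - c*b)*a - a*(b*c - c*b))*a - a*((b*c - c*b)*a - a*(b*c - c*b))) + (((c*a - a*c)*a - a*(c*a - a*c))*b - b*((c*a - a*c)*a - a*(c*a - a*c))) := by
  linear_combination (norm := (simp only [mul_sub, sub_mul, mul_add, add_mul, smul_sub, smul_add, mul_zero, zero_mul, smul_zero]; abel)) (-6 : ℤ) • (altL (a*b) (a) (c)) + (6 : ℤ) • (altR (a*b) (a) (c)) + (-2 : ℤ) • (altL (a*c) (a) (b)) + (9 : ℤ) • (altR (a*c) (a) (b)) + (-4 : ℤ) • (altL (a*c) (b) (a)) + (-6 : ℤ) • (altL (b*a) (a) (c)) + (6 : ℤ) • (altR (b*a) (a) (c)) + (-6 : ℤ) • (altL (b*c) (a) (a)) + (3 : ℤ) • (altR (b*c) (a) (a)) + (-10 : ℤ) • (altL (c*a)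 (a) (b)) + (9 : ℤ) • (altR (c*a) (a) (b)) + (-8 : ℤ) • (altL (c*a) (b) (a)) + (-6 : ℤ) • (altL (c*b) (a) (a)) + (3 : ℤ) • (altR (c*b) (a) (a)) + (6 : ℤ) • (altR (a) (a*b) (c)) + (1 : ℤ) • (altR (a) (a*c) (b)) + (6 : ℤ) • (altR (a) (b*a) (c)) + (5 : ℤ) • (altR (a) (c*a) (b)) + (-1 : ℤ) • (altR (b) (a*c) (a)) + (7 : ℤ) • (altR (b) (c*a) (a)) + (-3 : ℤ) • (a * (altL a b c)) + (-3 : ℤ) • ((altL a b c) * a) + (4 : ℤ) • (a * (altR a b c)) + (-4 : ℤ) • ((altR a b c) * a) + (-5 : ℤ) • (a * (altL a c b)) + (-1 : ℤ) • ((altL a c b) * a) + (2 : ℤ) • (a * (altR b a c)) + (-2 : ℤ) • ((altR b a c) * a) + (-7 : ℤ) • (a * (altL b c a)) + (1 : ℤ) • ((altL b c a) * a) + (3 : ℤ) • (b * (altL a a c)) + (3 : ℤ) • ((altL a a c) * b) + (-6 : ℤ) • (b * (altR a a c)) + (-6 : ℤ) • ((altR a a c) * b)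
end
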